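/- arXiv:2204.03275 — 6 statements merged into one kernel-verified Lean document; each statement's English description precedes it below -/
import Mathlib

section
/- Let k ≥ 1 be a real number. For every real s with s ≥ k, one has g_k(s) ≥ k·(log k − 1) + (s − k)²/(2k). -/
open Real intervalIntegral

/-- Truncation `T_k(s) = max(0, min(k, s))`. -/
noncomputable def Tk (k s : ℝ) : ℝ := max 0 (min k s)

/-- `g_k(s) = ∫₀ˢ (∫₁ʸ dz / T_k(z)) dy`. -/
noncomputable def gk (k s : ℝ) : ℝ := ∫ y in (0:ℝ)..s, ∫ z in (1:ℝ)..y, 1 / Tk k z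

/-!
For `1 ≤ k` the inner integral `∫₁ʸ dz / T_k(z)` is `log y` on `(0, k]` and
`log k + (y - k) / k` on `[k, ∞)`; integrating these pieces over `[0, k]` and `[k, s]` gives
`g_k(s) = k (log k - 1) + (s - k) log k + (s - k)² / (2k)`,
and the middle term is nonnegative.
-/

open Set MeasureTheory
open scoped Interval

theorem Tk_eq_self {k z : ℝ} (hz : 0 ≤ z) (hzk : z ≤ k) : Tk k z = z := by
  rw [Tk, min_eq_right hzk, max_eq_right hz]

theorem Tk_eq_left {k z : ℝ} (hk : 0 ≤ k) (hkz : k ≤ z) : Tk k z = k := by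
  rw [Tk, min_eq_left hkz, max_eq_right hk]

theorem continuous_Tk (k : ℝ) : Continuous (Tk k) := by
  unfold Tk
  fun_prop

theorem continuousOn_one_div_Tk {k : ℝ} (hk : 1 ≤ k) :
    ContinuousOn (fun z => 1 / Tk k z) (Ici 1) := by
  refine continuousOn_const.div (continuous_Tk k).continuousOn fun z hz => ?_
  rw [Tk]
  exact (one_pos.trans_le ((le_min hk hz).trans (le_max_right _ _))).ne'

theorem integral_one_div_Tk_of_le {k y : ℝ} (hk : 1 ≤ k) (hy : 0 < y) (hyk : y ≤ k) :
    ∫ z in (1:ℝ)..y, 1 / Tk k z = log y := by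
  have hTk : EqOn (fun z => 1 / Tk k z) (fun z => 1 / z) (uIcc 1 y) := fun z hz => by
    simp only [Tk_eq_self ((le_min zero_le_one hy.le).trans hz.1) (hz.2.trans (max_le hk hyk))]
  rw [integral_congr hTk, integral_one_div (notMem_uIcc_of_lt one_pos hy), div_one]

theorem integral_one_div_Tk_of_ge {k y : ℝ} (hk : 1 ≤ k) (hky : k ≤ y) :
    ∫ z in (1:ℝ)..y, 1 / Tk k z = log k + (y - k) / k := by
  have hk0 : 0 < k := one_pos.trans_le hk
  have hint : ∀ {a b : ℝ}, 1 ≤ a → 1 ≤ b →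
      IntervalIntegrable (fun z => 1 / Tk k z) volume a b :=
    fun ha hb => ((continuousOn_one_div_Tk hk).mono
      fun _ hz => (le_min ha hb).trans hz.1).intervalIntegrable
  have hTk : EqOn (fun z => 1 / Tk k z) (fun _ => 1 / k) (uIcc k y) := fun z hz => by
    rw [uIcc_of_le hky] at hz
    simp only [Tk_eq_left hk0.le hz.1]
  rw [← integral_add_adjacent_intervals (hint le_rfl hk) (hint hk (hk.trans hky)),
    integral_one_div_Tk_of_le hk hk0 le_rfl, integral_congr hTk, intervalIntegral.integral_const,
    smul_eq_mul]
  ring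

theorem gk_eq {k s : ℝ} (hk : 1 ≤ k) (hks : k ≤ s) :
    gk k s = k * (log k - 1) + (s - k) * log k + (s - k) ^ 2 / (2 * k) := by
  have hk0 : 0 < k := one_pos.trans_le hk
  have hlow : EqOn (fun y => ∫ z in (1:ℝ)..y, 1 / Tk k z) log (Ι 0 k) := fun y hy => by
    rw [uIoc_of_le hk0.le] at hy
    exact integral_one_div_Tk_of_le hk hy.1 hy.2
  have hhigh : EqOn (fun y => ∫ z in (1:ℝ)..y, 1 / Tk k z) (fun y => log k + (y - k) / k)
      (uIcc k s) := fun y hy => by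
    rw [uIcc_of_le hks] at hy
    exact integral_one_div_Tk_of_ge hk hy.1
  have hint_low : IntervalIntegrable (fun y => ∫ z in (1:ℝ)..y, 1 / Tk k z) volume 0 k :=
    (intervalIntegrable_congr hlow).2 intervalIntegrable_log'
  have hint_high : IntervalIntegrable (fun y => ∫ z in (1:ℝ)..y, 1 / Tk k z) volume k s :=
    (ContinuousOn.intervalIntegrable (by fun_prop)).congr (hhigh.symm.mono Ioc_subset_Icc_self)
  rw [gk, ← integral_add_adjacent_intervals hint_low hint_high,
    integral_congr_ae (.of_forall fun y hy => hlow hy), integral_log_from_zero,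
    integral_congr hhigh, integral_add intervalIntegrable_const
      (Continuous.intervalIntegrable (by fun_prop) _ _),
    intervalIntegral.integral_const, intervalIntegral.integral_div,
    integral_comp_sub_right (fun y => y), integral_id, smul_eq_mul]
  field_simp
  ring

theorem stmt_1 (k : ℝ) (hk : 1 ≤ k) (s : ℝ) (hs : k ≤ s) :
    gk k s ≥ k * (Real.log k - 1) + (s - k) ^ 2 / (2 * k) := by
  rw [gk_eq hk hs]
  have : 0 ≤ (s - k) * log k := mul_nonneg (sub_nonneg.2 hs) (log_nonneg hk)
  linarith
end

section
/- Let k ≥ 1 be a real number. For every real s ≥ 0, one has 2·√(T_k(s)) ≤ h_k(s). -/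
/-! With `a = T_k(s) ∈ [0, s]`, the truncation `T_k` is the identity on `[0, a]` and equals `a`
on `[a, s]`. Splitting the integral at `a` gives `h_k(s) = 2√a + (s - a)/√a ≥ 2√a`
(when `a = 0` both the integrand and `(s - a)/√a` are `0`, by the convention `1/0 = 0`). -/

open Real intervalIntegral

/-- `h_k(s) = ∫₀ˢ dz / √(T_k(z))`. -/
noncomputable def hk (k s : ℝ) : ℝ := ∫ z in (0:ℝ)..s, 1 / Real.sqrt (Tk k z)

lemma one_div_sqrt_eqOn_rpow :
    Set.EqOn (fun z : ℝ => 1 / √z) (fun z => z ^ (-(1 / 2) : ℝ)) (Set.Ici 0) := by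
  intro z hz
  simp only [sqrt_eq_rpow, one_div, ← rpow_neg hz]

lemma uIcc_zero_subset_Ici {b : ℝ} (hb : 0 ≤ b) : Set.uIcc 0 b ⊆ Set.Ici 0 := by
  rw [Set.uIcc_of_le hb]
  exact Set.Icc_subset_Ici_self

lemma intervalIntegrable_one_div_sqrt {b : ℝ} (hb : 0 ≤ b) :
    IntervalIntegrable (fun z => 1 / √z) MeasureTheory.volume 0 b :=
  (intervalIntegrable_rpow' (by norm_num)).congr
    ((one_div_sqrt_eqOn_rpow.mono ((uIcc_zero_subset_Ici hb).trans' Set.uIoc_subset_uIcc)).symm)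

lemma integral_one_div_sqrt {b : ℝ} (hb : 0 ≤ b) : ∫ z in (0 : ℝ)..b, 1 / √z = 2 * √b := by
  rw [integral_congr (one_div_sqrt_eqOn_rpow.mono (uIcc_zero_subset_Ici hb)),
    integral_rpow (Or.inl (by norm_num)), sqrt_eq_rpow]
  norm_num
  ring

section Tk
variable {k s z : ℝ}

lemma Tk_nonneg : 0 ≤ Tk k s := le_max_left _ _

lemma Tk_le_self (hs : 0 ≤ s) : Tk k s ≤ s := max_le hs (min_le_right _ _)

lemma Tk_eq_self_of_le (hz : 0 ≤ z) (hzs : z ≤ Tk k s) : Tk k z = z := by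
  unfold Tk at *
  grind

lemma Tk_eq_Tk_of_le (hz : Tk k s ≤ z) (hzs : z ≤ s) : Tk k z = Tk k s := by
  unfold Tk at *
  grind

lemma hk_eq (hs : 0 ≤ s) : hk k s = 2 * √(Tk k s) + (s - Tk k s) / √(Tk k s) := by
  set a := Tk k s
  have ha : 0 ≤ a := Tk_nonneg
  have hid : Set.EqOn (fun z => 1 / √(Tk k z)) (fun z => 1 / √z) (Set.uIcc 0 a) := by
    intro z hz
    rw [Set.uIcc_of_le ha] at hz
    simp only [Tk_eq_self_of_le hz.1 hz.2]
  have hconst : Set.EqOn (fun z => 1 / √(Tk k z)) (fun _ => 1 / √a) (Set.uIcc a s) := by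
    intro z hz
    rw [Set.uIcc_of_le (Tk_le_self hs)] at hz
    simp only [Tk_eq_Tk_of_le hz.1 hz.2, a]
  rw [hk, ← integral_add_adjacent_intervals
      ((intervalIntegrable_one_div_sqrt ha).congr (hid.mono Set.uIoc_subset_uIcc).symm)
      (intervalIntegrable_const.congr (hconst.mono Set.uIoc_subset_uIcc).symm),
    integral_congr hid, integral_congr hconst, integral_one_div_sqrt ha, integral_const,
    smul_eq_mul, mul_one_div]

end Tk

theorem stmt_3_general (k : ℝ) (s : ℝ) (hs : 0 ≤ s) :
    2 * Real.sqrt (Tk k s) ≤ hk k s := by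
  rw [hk_eq hs]
  have htail : 0 ≤ (s - Tk k s) / √(Tk k s) :=
    div_nonneg (sub_nonneg.2 (Tk_le_self hs)) (sqrt_nonneg _)
  linarith

theorem stmt_3 (k : ℝ) (hk1 : 1 ≤ k) (s : ℝ) (hs : 0 ≤ s) :
    2 * Real.sqrt (Tk k s) ≤ hk k s :=
  stmt_3_general k s hs
end

section
/- For every ξ > 0 and every y ≥ 0, the convex conjugate satisfies g_ξ*(y) ≤ ξ · (log(1 + y/ξ))² / (1 + log(1 + y/ξ)) · (1 + y/ξ). Equivalently, for every x > 0: x·y − ξ·x·(exp x − 1) ≤ ξ · (log(1 + y/ξ))² / (1 + log(1 + y/ξ)) · (1 + y/ξ). -/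
/-!
Writing `1 + y/ξ = exp L`, the claim is `x (exp L - exp x) ≤ a exp L` with `a = L² / (1 + L)`.
Bound `exp x` from below by its tangent line at `a`. Since `a = L - L / (1 + L)` and
`L / (1 + L) ≤ log (1 + L)`, the tangent's slope `exp a` is at least `exp L / (1 + L)`,
and what is left is the quadratic inequality `x (L + a - x) ≤ L²`, valid because `a ≤ L`.
-/

open Real

lemma exp_div_one_add_le_exp_sq_div {L : ℝ} (hL : 0 ≤ L) :
    exp L / (1 + L) ≤ exp (L ^ 2 / (1 + L)) := by
  have h1L : 0 < 1 + L := by linarith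
  have hlog : L / (1 + L) ≤ log (1 + L) := by
    have h := one_sub_inv_le_log_of_pos h1L
    have hsub : 1 - (1 + L)⁻¹ = L / (1 + L) := by field_simp; ring
    rwa [hsub] at h
  have ha : L ^ 2 / (1 + L) = L - L / (1 + L) := by field_simp; ring
  rw [div_le_iff₀ h1L]
  calc exp L = exp (L ^ 2 / (1 + L)) * exp (L / (1 + L)) := by rw [← exp_add, ha, sub_add_cancel]
    _ ≤ exp (L ^ 2 / (1 + L)) * (1 + L) := by gcongr; rwa [← le_log_iff_exp_le h1L]

lemma mul_one_add_sub_le_exp {a c : ℝ} (hc : 0 ≤ c) (hca : c ≤ exp a) (x : ℝ) :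
    c * (1 + x - a) ≤ exp x := by
  rcases le_or_gt 0 (1 + x - a) with h | h
  · calc c * (1 + x - a) ≤ exp a * (x - a + 1) := by
          rw [show x - a + 1 = 1 + x - a by ring]; gcongr
      _ ≤ exp a * exp (x - a) := by gcongr; exact add_one_le_exp _
      _ = exp x := by rw [← exp_add]; ring_nf
  · nlinarith [exp_pos x]

lemma mul_exp_sub_mul_exp_le {L x : ℝ} (hL : 0 ≤ L) (hx : 0 ≤ x) :
    x * exp L - x * exp x ≤ L ^ 2 / (1 + L) * exp L := by
  have h1L : 0 < 1 + L := by linarith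
  set a := L ^ 2 / (1 + L)
  set c := exp L / (1 + L)
  have hc : 0 ≤ c := by positivity
  have hexpL : exp L = c * (1 + L) := (div_mul_cancel₀ _ h1L.ne').symm
  have haL : a ≤ L := by
    rw [div_le_iff₀ h1L]; nlinarith
  have htangent := mul_one_add_sub_le_exp hc (exp_div_one_add_le_exp_sq_div hL) x
  calc x * exp L - x * exp x ≤ x * exp L - x * (c * (1 + x - a)) := by gcongr
    _ = c * (x * (L + a - x)) := by rw [hexpL]; ring
    _ ≤ c * L ^ 2 := by gcongr; nlinarith [sq_nonneg (L - x)]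
    _ = a * exp L := by rw [hexpL]; simp only [a]; field_simp

theorem stmt_7 (ξ : ℝ) (hξ : 0 < ξ) (y : ℝ) (hy : 0 ≤ y) :
    sSup {v : ℝ | ∃ x : ℝ, 0 < x ∧ v = x * y - ξ * x * (Real.exp x - 1)} ≤
      ξ * (Real.log (1 + y / ξ)) ^ 2 / (1 + Real.log (1 + y / ξ)) * (1 + y / ξ) ∧
    ∀ x : ℝ, 0 < x →
      x * y - ξ * x * (Real.exp x - 1) ≤
        ξ * (Real.log (1 + y / ξ)) ^ 2 / (1 + Real.log (1 + y / ξ)) * (1 + y / ξ) := by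
  have ht : 0 ≤ y / ξ := div_nonneg hy hξ.le
  set L := log (1 + y / ξ)
  have hexpL : exp L = 1 + y / ξ := exp_log (by linarith)
  have hL : 0 ≤ L := log_nonneg (by linarith)
  have pointwise (x : ℝ) (hx : 0 < x) :
      x * y - ξ * x * (exp x - 1) ≤ ξ * L ^ 2 / (1 + L) * (1 + y / ξ) := by
    have h := mul_le_mul_of_nonneg_left (mul_exp_sub_mul_exp_le hL hx.le) hξ.le
    rw [hexpL] at h
    calc x * y - ξ * x * (exp x - 1) = ξ * (x * (1 + y / ξ) - x * exp x) := by
          field_simp; ring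
      _ ≤ ξ * (L ^ 2 / (1 + L) * (1 + y / ξ)) := h
      _ = ξ * L ^ 2 / (1 + L) * (1 + y / ξ) := by ring
  refine ⟨Real.sSup_le ?_ (by positivity), pointwise⟩
  rintro v ⟨x, hx, rfl⟩
  exact pointwise x hx
end

section
/- There exist constants C > 0 and t₀ > 1 such that for all t ≥ t₀ one has Φ(g*(t)) ≤ C · t · log t, where Φ(u) = u·√(log u) and g*(t) = sup_{s>0} (s·t − exp(s²/4)). -/
/-!
Bounding `exp (s²/4)` below by its tangent line at the point where `exp = t / √(log t)` turns
`s t - exp (s²/4)` into a concave quadratic in `s`, whose maximum gives `g*(t) ≤ 2 t √(log t)`.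
Since `2 √(log t) ≤ t`, the logarithm of this bound is at most `2 log t`, so
`Φ(g*(t)) ≤ 2 t √(log t) · √(2 log t) = 2√2 · t log t`.
-/

open Real

/-- Convex conjugate of `s ↦ exp(s²/4)` on `(0, ∞)`. -/
noncomputable def gstar (t : ℝ) : ℝ :=
  sSup {v : ℝ | ∃ s : ℝ, 0 < s ∧ v = s * t - Real.exp (s ^ 2 / 4)}

/-- `Φ(u) = u·√(log u)`. -/
noncomputable def Phi (u : ℝ) : ℝ := u * Real.sqrt (Real.log u)

lemma mul_sub_log_add_one_le_exp {c : ℝ} (hc : 0 < c) (x : ℝ) :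
    c * (x - log c + 1) ≤ exp x := by
  calc c * (x - log c + 1) ≤ c * exp (x - log c) :=
        mul_le_mul_of_nonneg_left (add_one_le_exp _) hc.le
    _ = exp x := by rw [exp_sub, exp_log hc]; field_simp

lemma mul_sub_exp_sq_div_four_le {t : ℝ} (ht : exp 1 ≤ t) (s : ℝ) :
    s * t - exp (s ^ 2 / 4) ≤ 2 * t * √(log t) := by
  have ht0 : 0 < t := (exp_pos 1).trans_le ht
  have hL : 1 ≤ log t := (le_log_iff_exp_le ht0).mpr ht
  set r := √(log t)
  have hr1 : 1 ≤ r := one_le_sqrt.mpr hL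
  have hrr : r ^ 2 = log t := sq_sqrt (by linarith)
  have hlog : log (t / r) = r ^ 2 - log r := by
    rw [log_div ht0.ne' (by positivity), hrr]
  have htangent := mul_sub_log_add_one_le_exp (c := t / r) (by positivity) (s ^ 2 / 4)
  rw [hlog] at htangent
  have hkey : s * t - t / r * (s ^ 2 / 4 - (r ^ 2 - log r) + 1)
      = t / r * (2 * r ^ 2 - (s / 2 - r) ^ 2 - (log r + 1)) := by
    field_simp
    ring
  have hbound : t / r * (2 * r ^ 2 - (s / 2 - r) ^ 2 - (log r + 1)) ≤ t / r * (2 * r ^ 2) :=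
    mul_le_mul_of_nonneg_left
      (by linarith [sq_nonneg (s / 2 - r), log_nonneg hr1]) (by positivity)
  have hmax : t / r * (2 * r ^ 2) = 2 * t * r := by field_simp
  linarith

lemma gstar_le {t : ℝ} (ht : exp 1 ≤ t) : gstar t ≤ 2 * t * √(log t) := by
  have ht0 : 0 < t := (exp_pos 1).trans_le ht
  refine Real.sSup_le ?_ (by positivity)
  rintro v ⟨s, -, rfl⟩
  exact mul_sub_exp_sq_div_four_le ht s

lemma Phi_nonpos_of_lt_one {u : ℝ} (hu : u < 1) : Phi u ≤ 0 := by
  rcases le_or_gt u 0 with hu0 | hu0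
  · exact mul_nonpos_of_nonpos_of_nonneg hu0 (sqrt_nonneg _)
  · simp [Phi, sqrt_eq_zero_of_nonpos (log_nonpos hu0.le hu.le)]

lemma Phi_le_Phi {u v : ℝ} (huv : u ≤ v) (hv : 1 ≤ v) : Phi u ≤ Phi v := by
  rcases lt_or_ge u 1 with hu | hu
  · exact (Phi_nonpos_of_lt_one hu).trans (by unfold Phi; positivity)
  · exact mul_le_mul huv (sqrt_le_sqrt (log_le_log (by linarith) huv))
      (sqrt_nonneg _) (by linarith)

lemma two_mul_sqrt_log_le_self {t : ℝ} (ht : 0 < t) : 2 * √(log t) ≤ t := by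
  rcases le_or_gt (log t) 0 with hL | hL
  · rw [sqrt_eq_zero_of_nonpos hL]; linarith
  · have hsq := sq_sqrt hL.le
    nlinarith [log_le_sub_one_of_pos ht, sqrt_nonneg (log t), sq_nonneg (t - 2)]

lemma Phi_two_mul_sqrt_log_le {t : ℝ} (ht : 1 < t) :
    Phi (2 * t * √(log t)) ≤ 2 * √2 * t * log t := by
  have ht0 : 0 < t := by linarith
  have hL : 0 < log t := log_pos ht
  set r := √(log t)
  have hr : 0 < r := sqrt_pos.mpr hL
  have hlog : log (2 * t * r) ≤ 2 * log t :=
    calc log (2 * t * r) ≤ log (t * t) := by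
          apply log_le_log (by positivity)
          nlinarith [two_mul_sqrt_log_le_self ht0]
      _ = 2 * log t := by rw [log_mul ht0.ne' ht0.ne']; ring
  calc Phi (2 * t * r) ≤ 2 * t * r * √(2 * log t) :=
        mul_le_mul_of_nonneg_left (sqrt_le_sqrt hlog) (by positivity)
    _ = 2 * √2 * t * (r * r) := by rw [sqrt_mul zero_le_two]; ring
    _ = 2 * √2 * t * log t := by rw [mul_self_sqrt hL.le]

theorem stmt_8 :
    ∃ C : ℝ, 0 < C ∧ ∃ t₀ : ℝ, 1 < t₀ ∧ ∀ t : ℝ, t₀ ≤ t →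
      Phi (gstar t) ≤ C * t * Real.log t := by
  have he : 1 < exp 1 := one_lt_exp_iff.mpr one_pos
  refine ⟨2 * √2, by positivity, exp 1, he, fun t ht => ?_⟩
  have ht1 : 1 < t := he.trans_le ht
  have hL : 1 ≤ log t := (le_log_iff_exp_le (by linarith)).mpr ht
  have hbound : 1 ≤ 2 * t * √(log t) := by
    nlinarith [one_le_sqrt.mpr hL]
  calc Phi (gstar t) ≤ Phi (2 * t * √(log t)) := Phi_le_Phi (gstar_le ht) hbound
    _ ≤ 2 * √2 * t * log t := Phi_two_mul_sqrt_log_le ht1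
end

section
/- For every ξ > 0 and all reals γ₀, γ₁ with 0 < γ₀ ≤ γ₁, there exists a constant C > 0 (depending on ξ, γ₀, γ₁) such that for every D ≥ 0 and every D₀ with γ₀ ≤ D₀ ≤ γ₁: (log(1 + |D − D₀|/ξ))² / (1 + log(1 + |D − D₀|/ξ)) · (1 + |D − D₀|/ξ) ≤ C · (D·log(D/D₀) − D + D₀), where D·log(D/D₀) is interpreted as 0 when D = 0 (consistent with Lean's conventions for Real.log and multiplication). -/
open Real

/-!
The Hellinger bound `(√D - √D₀)² ≤ D log (D / D₀) - D + D₀` drives both regimes. Write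
`t = |D - D₀| / ξ`. While `D ≤ 4γ₁`, `t` stays bounded, the left-hand side is `O(t²)`, and
`(D - D₀)² = (√D - √D₀)² (√D + √D₀)² ≲ D log (D / D₀) - D + D₀`. Once `D ≥ 4γ₁ ≥ 4D₀`, the
Hellinger bound gives `D ≲ D log (D / D₀) - D + D₀`, while the left-hand side is at most
`log (1 + t) (1 + t) ≲ D (log (D / D₀) + O(1))`.
-/

noncomputable def relEntropyDensity (D D₀ : ℝ) : ℝ := D * log (D / D₀) - D + D₀

lemma sq_sqrt_sub_sqrt_le_relEntropyDensity {D D₀ : ℝ} (hD : 0 ≤ D) (hD₀ : 0 < D₀) :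
    (√D - √D₀) ^ 2 ≤ relEntropyDensity D D₀ := by
  unfold relEntropyDensity
  have hsq : (√D - √D₀) ^ 2 = D - 2 * (√D * √D₀) + D₀ := by
    rw [sub_sq, sq_sqrt hD, sq_sqrt hD₀.le]; ring
  rcases hD.eq_or_lt with rfl | hD
  · simp [sq_sqrt hD₀.le]
  have hD' : 0 < √D := sqrt_pos.2 hD
  have hlog : 2 * (1 - √D₀ / √D) ≤ log (D / D₀) := by
    have h := one_sub_inv_le_log_of_pos (div_pos hD' (sqrt_pos.2 hD₀))
    rw [inv_div] at h
    calc 2 * (1 - √D₀ / √D) ≤ 2 * log (√D / √D₀) := by gcongr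
      _ = log ((√D / √D₀) ^ 2) := by rw [log_pow]; norm_num
      _ = log (D / D₀) := by rw [div_pow, sq_sqrt hD.le, sq_sqrt hD₀.le]
  have hD_mul : D * (√D₀ / √D) = √D * √D₀ := by
    field_simp
    linear_combination (sq_sqrt hD.le).symm
  nlinarith [mul_le_mul_of_nonneg_left hlog hD.le]

lemma relEntropyDensity_nonneg {D D₀ : ℝ} (hD : 0 ≤ D) (hD₀ : 0 < D₀) :
    0 ≤ relEntropyDensity D D₀ :=
  (sq_nonneg _).trans (sq_sqrt_sub_sqrt_le_relEntropyDensity hD hD₀)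

lemma sq_sub_le_relEntropyDensity {D D₀ : ℝ} (hD : 0 ≤ D) (hD₀ : 0 < D₀) :
    (D - D₀) ^ 2 ≤ 2 * (D + D₀) * relEntropyDensity D D₀ := by
  have hfactor : (D - D₀) ^ 2 = (√D - √D₀) ^ 2 * (√D + √D₀) ^ 2 := by
    rw [← mul_pow, mul_comm, ← sq_sub_sq, sq_sqrt hD, sq_sqrt hD₀.le]
  have hsum : (√D + √D₀) ^ 2 ≤ 2 * (D + D₀) := by
    nlinarith [sq_nonneg (√D - √D₀), sq_sqrt hD, sq_sqrt hD₀.le]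
  rw [hfactor, mul_comm (2 * (D + D₀))]
  exact mul_le_mul (sq_sqrt_sub_sqrt_le_relEntropyDensity hD hD₀) hsum (sq_nonneg _)
    (relEntropyDensity_nonneg hD hD₀)

lemma le_four_mul_relEntropyDensity {D D₀ : ℝ} (hD₀ : 0 < D₀) (h : 4 * D₀ ≤ D) :
    D ≤ 4 * relEntropyDensity D D₀ := by
  have hD : 0 ≤ D := by linarith
  have hsqrt : 2 * √D₀ ≤ √D := by
    rw [show 2 * √D₀ = √(4 * D₀) by
      rw [sqrt_mul (by norm_num), show (4 : ℝ) = 2 ^ 2 by norm_num, sqrt_sq two_pos.le]]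
    exact sqrt_le_sqrt h
  nlinarith [sq_sqrt_sub_sqrt_le_relEntropyDensity hD hD₀, sq_sqrt hD, sqrt_nonneg D₀]

noncomputable def logSqWeight (t : ℝ) : ℝ := log (1 + t) ^ 2 / (1 + log (1 + t)) * (1 + t)

lemma logSqWeight_le_sq_mul {t : ℝ} (ht : 0 ≤ t) : logSqWeight t ≤ t ^ 2 * (1 + t) := by
  have hL : 0 ≤ log (1 + t) := log_nonneg (by linarith)
  have hLt : log (1 + t) ≤ t := by linarith [log_le_sub_one_of_pos (by linarith : 0 < 1 + t)]
  unfold logSqWeight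
  gcongr
  calc log (1 + t) ^ 2 / (1 + log (1 + t)) ≤ log (1 + t) ^ 2 :=
        div_le_self (sq_nonneg _) (by linarith)
    _ ≤ t ^ 2 := by gcongr

lemma logSqWeight_le_log_mul {t : ℝ} (ht : 0 ≤ t) : logSqWeight t ≤ log (1 + t) * (1 + t) := by
  have hL : 0 ≤ log (1 + t) := log_nonneg (by linarith)
  unfold logSqWeight
  gcongr
  rw [div_le_iff₀ (by linarith)]
  nlinarith

lemma logSqWeight_le_of_le {ξ D D₀ M : ℝ} (hξ : 0 < ξ) (hD : 0 ≤ D) (hD₀ : 0 < D₀)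
    (hDM : D ≤ M) (hD₀M : D₀ ≤ M) :
    logSqWeight (|D - D₀| / ξ) ≤ 4 * M * (1 + M / ξ) / ξ ^ 2 * relEntropyDensity D D₀ := by
  have ht : 0 ≤ |D - D₀| / ξ := by positivity
  have htM : |D - D₀| / ξ ≤ M / ξ := by
    gcongr
    exact abs_sub_le_iff.2 ⟨by linarith, by linarith⟩
  have hφ := relEntropyDensity_nonneg hD hD₀
  have hM : 0 ≤ M := by linarith
  calc logSqWeight (|D - D₀| / ξ) ≤ (|D - D₀| / ξ) ^ 2 * (1 + |D - D₀| / ξ) :=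
        logSqWeight_le_sq_mul ht
    _ ≤ (|D - D₀| / ξ) ^ 2 * (1 + M / ξ) := by gcongr
    _ = (D - D₀) ^ 2 * (1 + M / ξ) / ξ ^ 2 := by rw [div_pow, sq_abs]; ring
    _ ≤ 2 * (D + D₀) * relEntropyDensity D D₀ * (1 + M / ξ) / ξ ^ 2 := by
        gcongr; exact sq_sub_le_relEntropyDensity hD hD₀
    _ ≤ 2 * (M + M) * relEntropyDensity D D₀ * (1 + M / ξ) / ξ ^ 2 := by gcongr
    _ = 4 * M * (1 + M / ξ) / ξ ^ 2 * relEntropyDensity D D₀ := by ring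

lemma logSqWeight_le_of_four_mul_le {ξ D D₀ γ c : ℝ} (hξ : 0 < ξ) (hD₀ : 0 < D₀)
    (hD₀γ : D₀ ≤ γ) (hD : 4 * γ ≤ D) (hc : 1 / (4 * γ) + 1 / ξ ≤ c) :
    logSqWeight (|D - D₀| / ξ) ≤ c * (5 + 4 * c * γ) * relEntropyDensity D D₀ := by
  have hγ : 0 < γ := hD₀.trans_le hD₀γ
  have hDpos : 0 < D := by linarith
  have hc0 : 0 ≤ c := le_trans (by positivity) hc
  set t := |D - D₀| / ξ with ht_def
  have ht : 0 ≤ t := by positivity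
  have h1t : 1 + t ≤ c * D := by
    have h1 : 1 ≤ D / (4 * γ) := (one_le_div (by positivity)).2 hD
    have h2 : t ≤ D / ξ := by
      rw [ht_def, abs_of_nonneg (by linarith)]; gcongr; linarith
    calc 1 + t ≤ D / (4 * γ) + D / ξ := add_le_add h1 h2
      _ = (1 / (4 * γ) + 1 / ξ) * D := by ring
      _ ≤ c * D := by gcongr
  have hlog : log (1 + t) ≤ log (D / D₀) + c * γ :=
    calc log (1 + t) ≤ log (c * D) := log_le_log (by linarith) h1t
      _ = log (D / D₀) + log (c * D₀) := by
        rw [← log_mul (by positivity) (by nlinarith)]; congr 1; field_simp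
      _ ≤ log (D / D₀) + c * D₀ := by gcongr; exact log_le_self (by positivity)
      _ ≤ log (D / D₀) + c * γ := by gcongr
  have hL : 0 ≤ log (1 + t) := log_nonneg (by linarith)
  have hDφ : D ≤ 4 * relEntropyDensity D D₀ :=
    le_four_mul_relEntropyDensity hD₀ (by linarith)
  have hDlog : D * log (D / D₀) ≤ relEntropyDensity D D₀ + D := by
    unfold relEntropyDensity; linarith
  calc logSqWeight t ≤ log (1 + t) * (1 + t) := logSqWeight_le_log_mul ht
    _ ≤ (log (D / D₀) + c * γ) * (c * D) := mul_le_mul hlog h1t (by linarith) (by linarith)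
    _ = c * (D * log (D / D₀) + c * γ * D) := by ring
    _ ≤ c * (relEntropyDensity D D₀ + (1 + c * γ) * D) := by gcongr c * ?_; linarith
    _ ≤ c * (relEntropyDensity D D₀ + (1 + c * γ) * (4 * relEntropyDensity D D₀)) := by gcongr
    _ = c * (5 + 4 * c * γ) * relEntropyDensity D D₀ := by ring

theorem stmt_13 (ξ γ₀ γ₁ : ℝ) (hξ : 0 < ξ) (hγ₀ : 0 < γ₀) (hγ : γ₀ ≤ γ₁) :
    ∃ C : ℝ, 0 < C ∧ ∀ D : ℝ, 0 ≤ D → ∀ D₀ : ℝ, γ₀ ≤ D₀ → D₀ ≤ γ₁ →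
      (Real.log (1 + |D - D₀| / ξ)) ^ 2 / (1 + Real.log (1 + |D - D₀| / ξ)) *
          (1 + |D - D₀| / ξ) ≤
        C * (D * Real.log (D / D₀) - D + D₀) := by
  have hγ₁ : 0 < γ₁ := hγ₀.trans_le hγ
  set c := 1 / (4 * γ₁) + 1 / ξ
  set C₁ := 4 * (4 * γ₁) * (1 + 4 * γ₁ / ξ) / ξ ^ 2
  set C₂ := c * (5 + 4 * c * γ₁)
  refine ⟨C₁ + C₂, by positivity, fun D hD D₀ h₀ h₁ => ?_⟩
  have hD₀ : 0 < D₀ := hγ₀.trans_le h₀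
  have hφ := relEntropyDensity_nonneg hD hD₀
  change logSqWeight (|D - D₀| / ξ) ≤ (C₁ + C₂) * relEntropyDensity D D₀
  rcases le_or_gt D (4 * γ₁) with hDM | hDM
  · calc logSqWeight (|D - D₀| / ξ) ≤ C₁ * relEntropyDensity D D₀ :=
          logSqWeight_le_of_le hξ hD hD₀ hDM (by linarith)
      _ ≤ (C₁ + C₂) * relEntropyDensity D D₀ := by
          gcongr; exact le_add_of_nonneg_right (by positivity)
  · calc logSqWeight (|D - D₀| / ξ) ≤ C₂ * relEntropyDensity D D₀ :=
          logSqWeight_le_of_four_mul_le hξ hD₀ h₁ hDM.le le_rfl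
      _ ≤ (C₁ + C₂) * relEntropyDensity D D₀ := by
          gcongr; exact le_add_of_nonneg_left (by positivity)
end

section
/- Let c_n > 0, c_p > 0, M ≥ 0, and let a, b be reals with |b| ≤ M. Then (c_n·(exp a − exp b) − c_p·(exp(−a) − exp(−b)))·(a − b) ≥ min(c_n, c_p)·exp(−M)·|a − b|·(exp(|a − b|) − 1). -/
/-!
With `d = a - b` the left-hand side splits as
`c_n e^b · d (e^d - 1) + c_p e^{-b} · (-d) (e^{-d} - 1)`.
Both summands are nonnegative since `x (e^x - 1) ≥ 0`, both coefficients are at least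
`min c_n c_p · e^{-M}` because `-M ≤ ±b`, and whichever of `±d` equals `|d|` yields the bound.
-/

open Real

lemma mul_exp_sub_one_nonneg (x : ℝ) : 0 ≤ x * (exp x - 1) := by
  rcases le_total 0 x with hx | hx
  · exact mul_nonneg hx (sub_nonneg.2 (one_le_exp hx))
  · exact mul_nonneg_of_nonpos_of_nonpos hx (sub_nonpos.2 (exp_le_one_iff.2 hx))

lemma abs_mul_exp_abs_sub_one_le (x : ℝ) :
    |x| * (exp |x| - 1) ≤ x * (exp x - 1) + -x * (exp (-x) - 1) := by
  rcases abs_cases x with ⟨hx, -⟩ | ⟨hx, -⟩ <;> rw [hx]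
  · linarith [mul_exp_sub_one_nonneg (-x)]
  · linarith [mul_exp_sub_one_nonneg x]

lemma mul_exp_sub_sub_mul_exp_neg_sub_mul_sub (c_n c_p a b : ℝ) :
    (c_n * (exp a - exp b) - c_p * (exp (-a) - exp (-b))) * (a - b) =
      c_n * exp b * ((a - b) * (exp (a - b) - 1)) +
        c_p * exp (-b) * (-(a - b) * (exp (-(a - b)) - 1)) := by
  simp only [neg_sub, exp_sub, exp_neg]
  field_simp
  ring

theorem stmt_16_general (c_n c_p M a b : ℝ) (hcn : 0 < c_n) (hcp : 0 < c_p)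
    (hb : |b| ≤ M) :
    (c_n * (Real.exp a - Real.exp b) - c_p * (Real.exp (-a) - Real.exp (-b))) * (a - b) ≥
      min c_n c_p * Real.exp (-M) * |a - b| * (Real.exp |a - b| - 1) := by
  obtain ⟨hbM, hbM'⟩ := abs_le.mp hb
  have hκn : min c_n c_p * exp (-M) ≤ c_n * exp b :=
    mul_le_mul (min_le_left _ _) (exp_le_exp.2 hbM) (exp_pos _).le hcn.le
  have hκp : min c_n c_p * exp (-M) ≤ c_p * exp (-b) :=
    mul_le_mul (min_le_right _ _) (exp_le_exp.2 (by linarith)) (exp_pos _).le hcp.le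
  rw [ge_iff_le, mul_assoc, mul_exp_sub_sub_mul_exp_neg_sub_mul_sub]
  calc min c_n c_p * exp (-M) * (|a - b| * (exp |a - b| - 1))
      ≤ min c_n c_p * exp (-M) * ((a - b) * (exp (a - b) - 1)) +
          min c_n c_p * exp (-M) * (-(a - b) * (exp (-(a - b)) - 1)) := by
        rw [← mul_add]
        exact mul_le_mul_of_nonneg_left (abs_mul_exp_abs_sub_one_le _)
          (by positivity)
    _ ≤ _ := by
        gcongr <;> exact mul_exp_sub_one_nonneg _

theorem stmt_16 (c_n c_p M a b : ℝ) (hcn : 0 < c_n) (hcp : 0 < c_p)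
    (hM : 0 ≤ M) (hb : |b| ≤ M) :
    (c_n * (Real.exp a - Real.exp b) - c_p * (Real.exp (-a) - Real.exp (-b))) * (a - b) ≥
      min c_n c_p * Real.exp (-M) * |a - b| * (Real.exp |a - b| - 1) :=
  stmt_16_general c_n c_p M a b hcn hcp hb
end
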